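/- Let a=(a_1,...,a_n) be a weakly increasing real sequence and let e=(e_1,...,e_n) be a real sequence such that e is a restricted growth sequence relative to a (cap sense). Then every entry of the matrix M_{e→a} is non-negative. -/

import Mathlib

/-!
Write `P_k = ∏_{i<k} (x - a_i)`. Since `(x - e_m) P_k = P_{k+1} + (a_k - e_m) P_k`, the entries of
`M_{e→a}` satisfy the Pascal-type recursion `M_{m+1,k} = M_{m,k-1} + (a_k - e_m) M_{m,k}`, and the
`P_k` are monic of degree `k`, so expansions in them are unique. By induction row `m` vanishes outside
`capF m ≤ k ≤ m`, and in that range `e_m ≤ a_{capF m} ≤ a_k`: the recursion only adds nonnegative terms.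
-/

open Polynomial Finset

/-- `IsCOB n a e M` says that `M` is the change-of-basis matrix `M_{e→a}`:
for each `0 ≤ m ≤ n`, the entry `M m k` is the coefficient of `∏_{i=1}^k (x - a_i)`
in the expansion of `∏_{i=1}^m (x - e_i)` in the basis
`1, (x-a₁), …, ∏_{i=1}^n (x-a_i)`.  (Sequences are 0-indexed: `a i` is `a_{i+1}`.)
Since that basis expansion is unique, this characterizes `M_{e→a}` uniquely. -/
def IsCOB (n : ℕ) (a e : ℕ → ℝ) (M : Matrix (Fin (n+1)) (Fin (n+1)) ℝ) : Prop :=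
  ∀ m : Fin (n+1),
    (∏ i ∈ Finset.range (m : ℕ), (X - C (e i))) =
      ∑ k : Fin (n+1), C (M m k) * ∏ i ∈ Finset.range (k : ℕ), (X - C (a i))

/-- The cap-index function for the restricted-growth condition (0-indexed version of
`f` with `f(1) = 1`): `capF a e i` is `f(i+1) - 1`, so the cap for `e i` is
`a (capF a e i)`.  The index increments exactly when `e_i` equals its cap. -/
noncomputable def capF (a e : ℕ → ℝ) : ℕ → ℕ
  | 0 => 0
  | i + 1 => if e i = a (capF a e i) then capF a e i + 1 else capF a e i

/-- `e` is a restricted growth sequence relative to (weakly increasing) `a`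
(cap sense): each `e_i` is at most its cap `a_{f(i)}`. -/
def IsRGCap (n : ℕ) (a e : ℕ → ℝ) : Prop :=
  ∀ i, i < n → e i ≤ a (capF a e i)

section MonicBasis

variable {R : Type*} [Ring R] {p : ℕ → R[X]}

theorem eq_zero_of_sum_C_mul_eq_zero (hmonic : ∀ k, (p k).Monic)
    (hdeg : ∀ k, (p k).natDegree = k) :
    ∀ {N : ℕ} (d : Fin N → R), ∑ k : Fin N, C (d k) * p k = 0 → d = 0
  | 0, d, _ => Subsingleton.elim d 0
  | N + 1, d, h => by
    rw [Fin.sum_univ_castSucc] at h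
    have hlast : d (Fin.last N) = 0 := by
      have hcoeff := congrArg (coeff · N) h
      have hlow : ∀ k : Fin N, (C (d k.castSucc) * p k).coeff N = 0 := fun k => by
        rw [coeff_C_mul, coeff_eq_zero_of_natDegree_lt (by rw [hdeg]; exact k.isLt), mul_zero]
      have htop : (p N).coeff N = 1 := by simpa [hdeg] using (hmonic N).coeff_natDegree
      simpa [finsetSum_coeff, hlow, coeff_C_mul, htop] using hcoeff
    have hinit : (fun k : Fin N => d k.castSucc) = 0 :=
      eq_zero_of_sum_C_mul_eq_zero hmonic hdeg _ (by simpa [hlast] using h)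
    funext k
    induction k using Fin.lastCases with
    | last => exact hlast
    | cast k => exact congrFun hinit k

theorem sum_C_mul_injective (hmonic : ∀ k, (p k).Monic) (hdeg : ∀ k, (p k).natDegree = k)
    {N : ℕ} {d d' : Fin N → R}
    (h : ∑ k : Fin N, C (d k) * p k = ∑ k : Fin N, C (d' k) * p k) : d = d' := by
  have hsub := eq_zero_of_sum_C_mul_eq_zero hmonic hdeg (d - d') <| by
    simp only [Pi.sub_apply, C_sub, sub_mul, Finset.sum_sub_distrib, h, sub_self]
  exact sub_eq_zero.mp hsub

end MonicBasis

theorem monic_prod_X_sub_C_range {R : Type*} [CommRing R] (a : ℕ → R) (k : ℕ) :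
    (∏ i ∈ range k, (X - C (a i))).Monic :=
  monic_prod_of_monic _ _ fun i _ => monic_X_sub_C (a i)

theorem natDegree_prod_X_sub_C_range {R : Type*} [CommRing R] [Nontrivial R] (a : ℕ → R) (k : ℕ) :
    (∏ i ∈ range k, (X - C (a i))).natDegree = k := by
  rw [natDegree_prod_of_monic _ _ fun i _ => monic_X_sub_C (a i)]
  simp

section ChangeOfBasis

variable {R : Type*} [CommRing R] (a e : ℕ → R)

/-- Entries of `M_{e→a}`, from `(x - e_m) ∏_{i<k} (x - a_i) = ∏_{i<k+1} (x - a_i) + (a_k - e_m) ∏_{i<k} (x - a_i)`. -/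
def cobCoeff : ℕ → ℕ → R
  | 0, 0 => 1
  | 0, _ + 1 => 0
  | m + 1, 0 => (a 0 - e m) * cobCoeff m 0
  | m + 1, k + 1 => cobCoeff m k + (a (k + 1) - e m) * cobCoeff m (k + 1)

theorem cobCoeff_eq_zero_of_lt : ∀ {m k : ℕ}, m < k → cobCoeff a e m k = 0
  | 0, _ + 1, _ => rfl
  | m + 1, k + 1, h => by
    simp only [cobCoeff, cobCoeff_eq_zero_of_lt (m := m) (k := k) (by omega),
      cobCoeff_eq_zero_of_lt (m := m) (k := k + 1) (by omega), mul_zero, add_zero]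

theorem prod_X_sub_C_eq_sum_cobCoeff : ∀ {m N : ℕ}, m < N →
    ∏ i ∈ range m, (X - C (e i)) = ∑ k ∈ range N, C (cobCoeff a e m k) * ∏ i ∈ range k, (X - C (a i))
  | 0, N + 1, _ => by
    rw [sum_range_succ']
    simp [cobCoeff]
  | m + 1, N + 1, h => by
    set P : ℕ → R[X] := fun k => ∏ i ∈ range k, (X - C (a i))
    have hstep : ∀ k, C (cobCoeff a e m k) * P k * (X - C (e m)) =
        C (cobCoeff a e m k) * P (k + 1) + C ((a k - e m) * cobCoeff a e m k) * P k := fun k => by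
      simp only [P, prod_range_succ, C_mul, C_sub]
      ring
    have hshift : ∑ k ∈ range (N + 1), C ((a k - e m) * cobCoeff a e m k) * P k =
        ∑ k ∈ range N, C ((a (k + 1) - e m) * cobCoeff a e m (k + 1)) * P (k + 1) +
          C ((a 0 - e m) * cobCoeff a e m 0) * P 0 :=
      sum_range_succ' _ _
    calc ∏ i ∈ range (m + 1), (X - C (e i))
        = (∑ k ∈ range (N + 1), C (cobCoeff a e m k) * P k) * (X - C (e m)) := by
          rw [prod_range_succ, prod_X_sub_C_eq_sum_cobCoeff (by omega : m < N + 1)]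
      _ = ∑ k ∈ range N, C (cobCoeff a e m k) * P (k + 1) +
            ∑ k ∈ range (N + 1), C ((a k - e m) * cobCoeff a e m k) * P k := by
          rw [sum_mul, sum_congr rfl fun k _ => hstep k, sum_add_distrib, sum_range_succ,
            cobCoeff_eq_zero_of_lt a e (by omega : m < N), C_0, zero_mul, add_zero]
      _ = ∑ k ∈ range (N + 1), C (cobCoeff a e (m + 1) k) * P k := by
          rw [hshift, sum_range_succ' _ N]
          simp only [cobCoeff, C_add, add_mul, sum_add_distrib, add_assoc]

end ChangeOfBasis

theorem cobCoeff_eq_zero_of_lt_capF (a e : ℕ → ℝ) :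
    ∀ {m k : ℕ}, k < capF a e m → cobCoeff a e m k = 0
  | 0, _, h => absurd h (by simp [capF])
  | m + 1, k, h => by
    have hcap : k ≤ capF a e m := by
      unfold capF at h
      split_ifs at h <;> omega
    have hlast : (a k - e m) * cobCoeff a e m k = 0 := by
      rcases hcap.lt_or_eq with hlt | rfl
      · rw [cobCoeff_eq_zero_of_lt_capF a e hlt, mul_zero]
      · have heq : e m = a (capF a e m) := by
          by_contra hne
          simp [capF, hne] at h
        rw [heq, sub_self, zero_mul]
    cases k with
    | zero => exact hlast
    | succ k => rw [cobCoeff, cobCoeff_eq_zero_of_lt_capF a e (by omega), hlast, zero_add]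

theorem cobCoeff_nonneg {n : ℕ} {a e : ℕ → ℝ} (ha : ∀ i j, i ≤ j → j < n → a i ≤ a j)
    (he : IsRGCap n a e) : ∀ {m : ℕ}, m ≤ n → ∀ k, 0 ≤ cobCoeff a e m k
  | 0, _, 0 => zero_le_one
  | 0, _, _ + 1 => le_rfl
  | m + 1, hm, k => by
    have hfactor : ∀ j, 0 ≤ (a j - e m) * cobCoeff a e m j := fun j => by
      by_cases hj : capF a e m ≤ j ∧ j ≤ m
      · have : e m ≤ a j := (he m (by omega)).trans (ha _ _ hj.1 (by omega))
        exact mul_nonneg (by linarith) (cobCoeff_nonneg ha he (by omega) j)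
      · rcases not_and_or.mp hj with hlt | hgt
        · rw [cobCoeff_eq_zero_of_lt_capF a e (not_le.mp hlt), mul_zero]
        · rw [cobCoeff_eq_zero_of_lt a e (not_le.mp hgt), mul_zero]
    cases k with
    | zero => exact hfactor 0
    | succ k => exact add_nonneg (cobCoeff_nonneg ha he (by omega) k) (hfactor (k + 1))

theorem statement15 (n : ℕ) (a e : ℕ → ℝ)
    (ha : ∀ i j, i ≤ j → j < n → a i ≤ a j)
    (he : IsRGCap n a e)
    (M : Matrix (Fin (n+1)) (Fin (n+1)) ℝ) (hM : IsCOB n a e M) :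
    ∀ m k : Fin (n+1), 0 ≤ M m k := by
  intro m k
  have hexpand : ∑ j : Fin (n + 1), C (M m j) * ∏ i ∈ range j, (X - C (a i)) =
      ∑ j : Fin (n + 1), C (cobCoeff a e m j) * ∏ i ∈ range j, (X - C (a i)) := by
    rw [← hM m, prod_X_sub_C_eq_sum_cobCoeff a e m.isLt,
      Fin.sum_univ_eq_sum_range (fun j => C (cobCoeff a e m j) * ∏ i ∈ range j, (X - C (a i)))]
  have hrow := sum_C_mul_injective (monic_prod_X_sub_C_range a) (natDegree_prod_X_sub_C_range a)
    hexpand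
  rw [congrFun hrow k]
  exact cobCoeff_nonneg ha he (Nat.lt_succ_iff.mp m.isLt) k
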